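/- Let ρ > 0, let A, B ∈ ℂ, and let w be a holomorphic function on the open disc D(0,ρ) ⊆ ℂ. Then there exist 0 < ρ′ ≤ ρ and a holomorphic function k on D(0,ρ′) with k(0) = 1 such that z·k″(z) + 3·k′(z) = (A + B·z + z²·w(z))·k(z) for all z ∈ D(0,ρ′). -/

import Mathlib

/-!
Write `q = A + B z + z² w = ∑ cₙ zⁿ` and look for `k = ∑ aₙ zⁿ`. Comparing coefficients of `zⁿ`,
the equation `z k'' + 3 k' = q k` becomes `(n + 1)(n + 3) aₙ₊₁ = ∑_{j ≤ n} cⱼ aₙ₋ⱼ`, which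
determines every `aₙ` from `a₀ = 1` because `(n + 1)(n + 3)` never vanishes: this is where the
exponent `3/2` being the larger root of the indicial equation enters. If `‖cₙ‖ ≤ C Rⁿ`, induction
gives `‖aₙ‖ ≤ (C + R)ⁿ`, so `k` has a positive radius of convergence, and on a disc inside both
radii termwise differentiation and the Cauchy product turn the recursion back into the equation.
-/

open Metric Filter Topology FormalMultilinearSeries

section PowerSeries

variable {𝕜 : Type*} [NontriviallyNormedField 𝕜] (a : ℕ → 𝕜)

def derivCoeff (n : ℕ) : 𝕜 := (n + 1) * a (n + 1)

lemma derivSeries_ofScalars_apply_one (n : ℕ) (z : 𝕜) :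
    (ofScalars 𝕜 a).derivSeries n (fun _ ↦ z) 1 = derivCoeff a n * z ^ n := by
  rw [apply_eq_pow_smul_coeff, _root_.smul_apply, derivSeries_coeff_one,
    coeff_ofScalars, smul_eq_mul, nsmul_eq_mul, derivCoeff]
  push_cast
  ring

lemma radius_ofScalars_le_radius_ofScalars_derivCoeff :
    (ofScalars 𝕜 a).radius ≤ (ofScalars 𝕜 (derivCoeff a)).radius := by
  refine (ofScalars 𝕜 a).radius_le_radius_derivSeries.trans (radius_le_of_le fun n ↦ ?_)
  calc ‖ofScalars 𝕜 (derivCoeff a) n‖ = ‖(ofScalars 𝕜 a).derivSeries n (fun _ ↦ 1) 1‖ := by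
        rw [norm_apply_eq_norm_coef, coeff_ofScalars, derivSeries_ofScalars_apply_one, one_pow,
          mul_one]
    _ ≤ ‖(ofScalars 𝕜 a).derivSeries n‖ := by
        simpa using ((ofScalars 𝕜 a).derivSeries n (fun _ ↦ 1)).le_opNorm 1 |>.trans
          (mul_le_mul_of_nonneg_right (((ofScalars 𝕜 a).derivSeries n).le_opNorm _) (by simp))

variable {a} {z : 𝕜}

lemma summable_norm_ofScalars (hz : ‖z‖ₑ < (ofScalars 𝕜 a).radius) :
    Summable fun n ↦ ‖a n * z ^ n‖ := by
  simpa only [ofScalars_apply_eq, smul_eq_mul] using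
    (ofScalars 𝕜 a).summable_norm_apply (mem_eball_zero_iff.mpr hz)

variable [CompleteSpace 𝕜]

lemma hasDerivAt_ofScalarsSum (hz : ‖z‖ₑ < (ofScalars 𝕜 a).radius) :
    HasDerivAt (ofScalarsSum a) (ofScalarsSum (derivCoeff a) z) z := by
  have h := ((ofScalars 𝕜 a).hasFDerivAt_sum hz).hasDerivAt
  have hs : Summable fun n ↦ (ofScalars 𝕜 a).derivSeries n (fun _ ↦ z) :=
    (ofScalars 𝕜 a).derivSeries.summable
      (by simpa using hz.trans_le (ofScalars 𝕜 a).radius_le_radius_derivSeries)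
  have happly : (∑' n, (ofScalars 𝕜 a).derivSeries n (fun _ ↦ z)) 1
      = ∑' n, (ofScalars 𝕜 a).derivSeries n (fun _ ↦ z) 1 :=
    (ContinuousLinearMap.apply 𝕜 𝕜 1).map_tsum hs
  rw [FormalMultilinearSeries.sum, happly] at h
  rw [ofScalars_sum_eq]
  simp only [derivSeries_ofScalars_apply_one] at h
  exact h

lemma hasSum_ofScalarsSum (hz : ‖z‖ₑ < (ofScalars 𝕜 a).radius) :
    HasSum (fun n ↦ a n * z ^ n) (ofScalarsSum a z) := by
  have h := (ofScalars 𝕜 a).hasSum (mem_eball_zero_iff.mpr hz)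
  simp only [ofScalars_apply_eq, smul_eq_mul] at h
  exact h

lemma deriv_ofScalarsSum_eventuallyEq (hz : ‖z‖ₑ < (ofScalars 𝕜 a).radius) :
    deriv (ofScalarsSum a) =ᶠ[𝓝 z] ofScalarsSum (derivCoeff a) := by
  filter_upwards [isOpen_eball.mem_nhds (mem_eball_zero_iff.mpr hz)] with w hw
  exact (hasDerivAt_ofScalarsSum (mem_eball_zero_iff.mp hw)).deriv

lemma deriv_deriv_ofScalarsSum (hz : ‖z‖ₑ < (ofScalars 𝕜 a).radius) :
    deriv (deriv (ofScalarsSum a)) z = ofScalarsSum (derivCoeff (derivCoeff a)) z := by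
  rw [(deriv_ofScalarsSum_eventuallyEq hz).deriv_eq]
  exact (hasDerivAt_ofScalarsSum
    (hz.trans_le (radius_ofScalars_le_radius_ofScalars_derivCoeff a))).deriv

lemma hasSum_mul_ofScalarsSum_derivCoeff_derivCoeff_add (γ : 𝕜)
    (hz : ‖z‖ₑ < (ofScalars 𝕜 a).radius) :
    HasSum (fun n : ℕ ↦ (n + 1) * (n + γ) * a (n + 1) * z ^ n)
      (z * ofScalarsSum (derivCoeff (derivCoeff a)) z + γ * ofScalarsSum (derivCoeff a) z) := by
  have hz₁ := hz.trans_le (radius_ofScalars_le_radius_ofScalars_derivCoeff a)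
  have hz₂ := hz₁.trans_le (radius_ofScalars_le_radius_ofScalars_derivCoeff (derivCoeff a))
  have hshift : HasSum (fun n : ℕ ↦ n * derivCoeff a n * z ^ n)
      (z * ofScalarsSum (derivCoeff (derivCoeff a)) z) := by
    refine (hasSum_nat_add_iff' 1).mp ?_
    simp only [Finset.range_one, Finset.sum_singleton, Nat.cast_zero, zero_mul, sub_zero]
    refine ((hasSum_ofScalarsSum hz₂).mul_left z).congr_fun fun n ↦ ?_
    simp only [derivCoeff]
    push_cast
    ring
  refine (hshift.add ((hasSum_ofScalarsSum hz₁).mul_left γ)).congr_fun fun n ↦ ?_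
  simp only [derivCoeff]
  ring

lemma hasSum_ofScalarsSum_mul {c : ℕ → 𝕜} (hc : ‖z‖ₑ < (ofScalars 𝕜 c).radius)
    (ha : ‖z‖ₑ < (ofScalars 𝕜 a).radius) :
    HasSum (fun n ↦ (∑ j ∈ Finset.range (n + 1), c j * a (n - j)) * z ^ n)
      (ofScalarsSum c z * ofScalarsSum a z) := by
  have hc' := summable_norm_ofScalars hc
  have ha' := summable_norm_ofScalars ha
  rw [← (hasSum_ofScalarsSum hc).tsum_eq, ← (hasSum_ofScalarsSum ha).tsum_eq,
    tsum_mul_tsum_eq_tsum_sum_range_of_summable_norm hc' ha']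
  refine ((summable_norm_sum_mul_range_of_summable_norm hc' ha').of_norm.hasSum).congr_fun
    fun n ↦ ?_
  rw [Finset.sum_mul]
  refine Finset.sum_congr rfl fun j hj ↦ ?_
  rw [show z ^ n = z ^ j * z ^ (n - j) by
    rw [← pow_add, Nat.add_sub_cancel' (Finset.mem_range_succ_iff.mp hj)]]
  ring

end PowerSeries

section Frobenius

open Finset

noncomputable def frobeniusCoeff (c : ℕ → ℂ) : ℕ → ℂ
  | 0 => 1
  | n + 1 => (∑ j ∈ range (n + 1), c j * frobeniusCoeff c (n - j)) / ((n + 1) * (n + 3))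
  decreasing_by omega

variable (c : ℕ → ℂ)

lemma frobeniusCoeff_zero : frobeniusCoeff c 0 = 1 := by
  rw [frobeniusCoeff]

lemma norm_natCast_add_one_mul_natCast_add_three (n : ℕ) :
    ‖((n : ℂ) + 1) * (n + 3)‖ = (n + 1) * (n + 3) := by
  exact_mod_cast Complex.norm_natCast ((n + 1) * (n + 3))

lemma frobeniusCoeff_succ (n : ℕ) :
    ((n : ℂ) + 1) * (n + 3) * frobeniusCoeff c (n + 1)
      = ∑ j ∈ range (n + 1), c j * frobeniusCoeff c (n - j) := by
  have hne : ((n : ℂ) + 1) * (n + 3) ≠ 0 := by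
    rw [← norm_ne_zero_iff, norm_natCast_add_one_mul_natCast_add_three]
    positivity
  rw [frobeniusCoeff, mul_div_cancel₀ _ hne]

lemma norm_frobeniusCoeff_le {C R : ℝ} (hR : 0 ≤ R) (hc : ∀ n, ‖c n‖ ≤ C * R ^ n) (n : ℕ) :
    ‖frobeniusCoeff c n‖ ≤ (C + R) ^ n := by
  have hC : 0 ≤ C := by simpa using (norm_nonneg _).trans (hc 0)
  induction n using Nat.strong_induction_on with
  | _ n ih =>
  rcases n with _ | n
  · simp [frobeniusCoeff_zero]
  have hterm : ∀ j ∈ range (n + 1), ‖c j * frobeniusCoeff c (n - j)‖ ≤ C * (C + R) ^ n := by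
    intro j hj
    have hjn := mem_range_succ_iff.mp hj
    calc ‖c j * frobeniusCoeff c (n - j)‖ ≤ C * R ^ j * (C + R) ^ (n - j) := by
          rw [norm_mul]
          gcongr
          exacts [hc j, ih _ (by omega)]
      _ ≤ C * (C + R) ^ j * (C + R) ^ (n - j) := by gcongr; linarith
      _ = C * (C + R) ^ n := by rw [mul_assoc, ← pow_add, Nat.add_sub_cancel' hjn]
  have hsum := norm_sum_le_of_le _ hterm
  rw [sum_const, card_range, nsmul_eq_mul, Nat.cast_add_one] at hsum
  rw [frobeniusCoeff, norm_div, norm_natCast_add_one_mul_natCast_add_three,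
    div_le_iff₀ (by positivity)]
  calc _ ≤ (n + 1) * (C * (C + R) ^ n) := hsum
    _ ≤ (n + 1) * ((n + 3) * ((C + R) ^ n * (C + R))) := by
      refine mul_le_mul_of_nonneg_left ?_ (by positivity)
      calc C * (C + R) ^ n ≤ (C + R) ^ n * (C + R) := by
            rw [mul_comm]; gcongr; linarith
        _ ≤ (n + 3) * ((C + R) ^ n * (C + R)) := le_mul_of_one_le_left (by positivity) (by linarith)
    _ = (C + R) ^ (n + 1) * ((n + 1) * (n + 3)) := by ring

lemma radius_ofScalars_frobeniusCoeff_pos (hc : 0 < (ofScalars ℂ c).radius) :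
    0 < (ofScalars ℂ (frobeniusCoeff c)).radius := by
  obtain ⟨C, R, hC, hR, hCR⟩ := (ofScalars ℂ c).le_mul_pow_of_radius_pos hc
  simp only [ofScalars_norm] at hCR
  have hK : 0 < C + R := by positivity
  refine lt_of_lt_of_le (by simpa using hK) ((ofScalars ℂ (frobeniusCoeff c)).le_radius_of_bound 1
    (r := (C + R)⁻¹.toNNReal) fun n ↦ ?_)
  rw [ofScalars_norm, Real.coe_toNNReal _ (inv_nonneg.mpr hK.le), inv_pow, ← div_eq_mul_inv,
    div_le_one (pow_pos hK n)]
  exact norm_frobeniusCoeff_le c hR.le hCR n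

variable {c} {z : ℂ}

lemma mul_deriv_deriv_add_three_mul_deriv_ofScalarsSum_frobeniusCoeff
    (hc : ‖z‖ₑ < (ofScalars ℂ c).radius) (ha : ‖z‖ₑ < (ofScalars ℂ (frobeniusCoeff c)).radius) :
    z * deriv (deriv (ofScalarsSum (frobeniusCoeff c))) z
        + 3 * deriv (ofScalarsSum (frobeniusCoeff c)) z
      = ofScalarsSum c z * ofScalarsSum (frobeniusCoeff c) z := by
  rw [deriv_deriv_ofScalarsSum ha, (hasDerivAt_ofScalarsSum ha).deriv]
  refine (hasSum_mul_ofScalarsSum_derivCoeff_derivCoeff_add 3 ha).unique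
    ((hasSum_ofScalarsSum_mul hc ha).congr_fun fun n ↦ ?_)
  rw [← frobeniusCoeff_succ]

end Frobenius

/-- Existence of the Frobenius solution with the larger exponent `3/2` for
`f″ = (3/(4z²) + A/z + B + z·w(z))·f` near `z = 0`: substituting
`f = z^{3/2}·k(z)`, there always exists a holomorphic `k` with `k(0) = 1`
solving `z·k″ + 3·k′ = (A + Bz + z²w)·k`, for arbitrary `A` and `B`. -/
theorem frobenius_solution_larger_exponent
    (ρ : ℝ) (hρ : 0 < ρ) (A B : ℂ) (w : ℂ → ℂ)
    (hw : DifferentiableOn ℂ w (ball (0 : ℂ) ρ)) :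
    ∃ ρ' : ℝ, 0 < ρ' ∧ ρ' ≤ ρ ∧
      ∃ k : ℂ → ℂ, DifferentiableOn ℂ k (ball (0 : ℂ) ρ') ∧ k 0 = 1 ∧
        ∀ z ∈ ball (0 : ℂ) ρ',
          z * deriv (deriv k) z + 3 * deriv k z = (A + B * z + z ^ 2 * w z) * k z := by
  set q : ℂ → ℂ := fun z ↦ A + B * z + z ^ 2 * w z
  have hq : DifferentiableOn ℂ q (ball 0 ρ) := by fun_prop
  obtain ⟨r, hqr⟩ := (hq.analyticAt (ball_mem_nhds 0 hρ)).hasFPowerSeriesAt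
  set c : ℕ → ℂ := fun n ↦ iteratedDeriv n q 0 / n.factorial
  have ha := radius_ofScalars_frobeniusCoeff_pos c (hqr.r_pos.trans_le hqr.r_le)
  obtain ⟨ρ', -, hρ'⟩ := ENNReal.lt_iff_exists_real_btwn.mp
    (lt_min (lt_min hqr.r_pos ha) (ENNReal.ofReal_pos.mpr hρ))
  simp only [lt_min_iff] at hρ'
  obtain ⟨hρ'0, ⟨hρ'r, hρ'a⟩, hρ'ρ⟩ := hρ'
  have hball : ∀ z ∈ ball (0 : ℂ) ρ', ‖z‖ₑ < ENNReal.ofReal ρ' := fun z hz ↦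
    mem_eball_zero_iff.mp (by rwa [eball_ofReal])
  refine ⟨ρ', ENNReal.ofReal_pos.mp hρ'0, (ENNReal.ofReal_lt_ofReal_iff hρ).mp hρ'ρ |>.le,
    ofScalarsSum (frobeniusCoeff c), fun z hz ↦ ?_, by simp [frobeniusCoeff_zero], fun z hz ↦ ?_⟩
  · exact (hasDerivAt_ofScalarsSum ((hball z hz).trans hρ'a)).differentiableAt
      |>.differentiableWithinAt
  · have hzr := (hball z hz).trans hρ'r
    have hqz : q z = ofScalarsSum c z := by
      have h := hqr.sum (mem_eball_zero_iff.mpr hzr)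
      rw [zero_add] at h
      exact h
    rw [mul_deriv_deriv_add_three_mul_deriv_ofScalarsSum_frobeniusCoeff (hzr.trans_le hqr.r_le)
      ((hball z hz).trans hρ'a), ← hqz]
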